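/- arXiv:1705.00807 — 2 statements merged into one kernel-verified Lean document; each statement's English description precedes it below -/
import Mathlib

section
/- There exist universal constants 0 < c ≤ C and c₀ ≥ 1 such that for all positive integers S and n with n ≥ c₀·S, the maximum likelihood estimator in the Poisson sampling model satisfies c·S/n ≤ sup_{P,Q ∈ M_S} E_P |L_1(P_n,Q) − L_1(P,Q)|² ≤ C·S/n. -/
/-!
Upper bound: by the reverse triangle inequality `|L₁(P_n,Q) − L₁(P,Q)| ≤ ∑ |p̂_i − p_i|`, so by
Cauchy–Schwarz the squared error is at most `S ∑ (p̂_i − p_i)²`, whose mean is `S ∑ p_i / n = S / n`.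

Lower bound: take `P = Q` uniform, so that `L₁(P,Q) = 0` and, by Jensen, the risk is at least
`(∑ E|p̂_i − 1/S|)²`. Each `X_i` is `Poisson(λ)` with `λ = n/S ≥ 1`, and its mean absolute deviation is
at least `(3/16)√λ`: split `E(X − λ)² = λ` at `|X − λ| = 4√λ` and bound the tail by the fourth central
moment `3λ² + λ`. This gives the risk `≥ (9/256) S/n`.
-/

open scoped BigOperators ENNReal

/-- The Poisson(lam) probability mass function on the nonnegative integers. -/
noncomputable def poissonPMF (lam : ℝ) (k : ℕ) : ℝ :=
  Real.exp (-lam) * lam ^ k / (Nat.factorial k)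

/-- `P` is a probability vector on `{1,…,S}` (an element of `M_S`). -/
def IsDist {S : ℕ} (p : Fin S → ℝ) : Prop :=
  (∀ i, 0 ≤ p i) ∧ ∑ i, p i = 1

/-- Joint pmf of `S` independent coordinates `X_i ~ Poisson(n p_i)` (Poisson sampling model). -/
noncomputable def prodPMF {S : ℕ} (n : ℕ) (p : Fin S → ℝ) (x : Fin S → ℕ) : ℝ :=
  ∏ i, poissonPMF (n * p i) (x i)

/-- The `L₁` distance between two vectors. -/
noncomputable def L1dist {S : ℕ} (p q : Fin S → ℝ) : ℝ :=
  ∑ i, |p i - q i|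

/-- The mean squared error `E_P (est(X) - L)²` in the Poisson sampling model, valued in `ℝ≥0∞`. -/
noncomputable def risk {S : ℕ} (n : ℕ) (p : Fin S → ℝ) (L : ℝ) (est : (Fin S → ℕ) → ℝ) : ℝ≥0∞ :=
  ∑' x : Fin S → ℕ, ENNReal.ofReal (prodPMF n p x * (est x - L) ^ 2)

/-- The plug-in (MLE) estimator `L₁(P_n, Q) = Σ_i |X_i/n - q_i|` with `Q` known. -/
noncomputable def mleEst {S : ℕ} (n : ℕ) (q : Fin S → ℝ) (x : Fin S → ℕ) : ℝ :=
  ∑ i, |(x i : ℝ) / n - q i|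

open MeasureTheory Finset
open ProbabilityTheory (poissonMeasure)

lemma sq_le_mul_abs_add_pow_four_div {t : ℝ} (ht : 0 < t) (y : ℝ) :
    y ^ 2 ≤ t * |y| + y ^ 4 / t ^ 2 := by
  rcases le_or_gt |y| t with hy | hy
  · have : y ^ 2 ≤ t * |y| := by nlinarith [sq_abs y, abs_nonneg y]
    have : 0 ≤ y ^ 4 / t ^ 2 := by positivity
    linarith
  · have : y ^ 2 ≤ y ^ 4 / t ^ 2 := by
      rw [le_div_iff₀ (by positivity)]
      nlinarith [sq_abs y, abs_nonneg y, mul_lt_mul'' hy hy ht.le ht.le]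
    nlinarith [abs_nonneg y]

lemma sq_lintegral_le_lintegral_sq {α : Type*} [MeasurableSpace α] {μ : Measure α}
    [IsProbabilityMeasure μ] {f : α → ℝ≥0∞} (hf : AEMeasurable f μ) :
    (∫⁻ a, f a ∂μ) ^ 2 ≤ ∫⁻ a, f a ^ 2 ∂μ := by
  have h := ENNReal.lintegral_mul_le_Lp_mul_Lq μ Real.HolderConjugate.two_two hf
    (aemeasurable_const (b := 1))
  simp only [Pi.mul_apply, mul_one, lintegral_const, measure_univ, ENNReal.rpow_two, one_pow,
    ENNReal.one_rpow] at h
  calc (∫⁻ a, f a ∂μ) ^ 2 ≤ ((∫⁻ a, f a ^ 2 ∂μ) ^ (1 / 2 : ℝ)) ^ (2 : ℝ) := by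
        rw [ENNReal.rpow_two]; gcongr
    _ = ∫⁻ a, f a ^ 2 ∂μ := by rw [← ENNReal.rpow_mul]; norm_num

section Poisson

variable {lam : ℝ}

lemma poissonPMF_nonneg (h : 0 ≤ lam) (k : ℕ) : 0 ≤ poissonPMF lam k := by
  unfold poissonPMF; positivity

lemma poissonMeasure_toNNReal_singleton (h : 0 ≤ lam) (k : ℕ) :
    poissonMeasure lam.toNNReal {k} = ENNReal.ofReal (poissonPMF lam k) := by
  rw [ProbabilityTheory.poissonMeasure_singleton, Real.coe_toNNReal _ h, poissonPMF]

lemma hasSum_poissonPMF (h : 0 ≤ lam) : HasSum (poissonPMF lam) 1 := by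
  have := ProbabilityTheory.hasSum_one_poissonMeasure lam.toNNReal
  rwa [Real.coe_toNNReal _ h] at this

lemma hasSum_poissonPMF_mul_descFactorial (h : 0 ≤ lam) (r : ℕ) :
    HasSum (fun k => poissonPMF lam k * k.descFactorial r) (lam ^ r) := by
  have hinit : ∑ k ∈ range r, poissonPMF lam k * k.descFactorial r = 0 :=
    sum_eq_zero fun k hk => by simp [Nat.descFactorial_eq_zero_iff_lt.mpr (mem_range.mp hk)]
  have hshift : (fun k => poissonPMF lam (k + r) * (k + r).descFactorial r) =
      fun k => lam ^ r * poissonPMF lam k := by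
    funext k
    have hfac : (k.factorial : ℝ) * (k + r).descFactorial r = (k + r).factorial := by
      exact_mod_cast
        Nat.add_sub_cancel k r ▸ Nat.factorial_mul_descFactorial (Nat.le_add_left r k)
    simp only [poissonPMF]
    field_simp
    rw [← hfac]
    ring
  rw [← hasSum_nat_add_iff' r, hinit, sub_zero, hshift]
  simpa using (hasSum_poissonPMF h).mul_left (lam ^ r)

-- The central moments below expand `(k - λ)ʳ` in the falling factorials `k.descFactorial j`,
-- whose Poisson means are `λ ^ j`.
lemma hasSum_poissonPMF_mul_sub_sq (h : 0 ≤ lam) :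
    HasSum (fun k => poissonPMF lam k * ((k : ℝ) - lam) ^ 2) lam := by
  have key := (hasSum_poissonPMF_mul_descFactorial h 2).add
    (((hasSum_poissonPMF_mul_descFactorial h 1).mul_left (1 - 2 * lam)).add
      ((hasSum_poissonPMF_mul_descFactorial h 0).mul_left (lam ^ 2)))
  convert key using 1
  · funext k
    simp only [← descPochhammer_eval_eq_descFactorial ℝ, descPochhammer_succ_eval,
      descPochhammer_zero, Polynomial.eval_one]
    push_cast
    ring
  · ring

lemma hasSum_poissonPMF_mul_sub_pow_four (h : 0 ≤ lam) :
    HasSum (fun k => poissonPMF lam k * ((k : ℝ) - lam) ^ 4) (3 * lam ^ 2 + lam) := by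
  have key := (hasSum_poissonPMF_mul_descFactorial h 4).add
    (((hasSum_poissonPMF_mul_descFactorial h 3).mul_left (6 - 4 * lam)).add
      (((hasSum_poissonPMF_mul_descFactorial h 2).mul_left (7 - 12 * lam + 6 * lam ^ 2)).add
        (((hasSum_poissonPMF_mul_descFactorial h 1).mul_left
            (1 - 4 * lam + 6 * lam ^ 2 - 4 * lam ^ 3)).add
          ((hasSum_poissonPMF_mul_descFactorial h 0).mul_left (lam ^ 4)))))
  convert key using 1
  · funext k
    simp only [← descPochhammer_eval_eq_descFactorial ℝ, descPochhammer_succ_eval,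
      descPochhammer_zero, Polynomial.eval_one]
    push_cast
    ring
  · ring

lemma summable_poissonPMF_mul_abs_sub (h : 0 ≤ lam) :
    Summable fun k => poissonPMF lam k * |(k : ℝ) - lam| := by
  refine Summable.of_nonneg_of_le (fun k => mul_nonneg (poissonPMF_nonneg h k) (abs_nonneg _))
    (fun k => ?_) ((hasSum_poissonPMF h).summable.add (hasSum_poissonPMF_mul_sub_sq h).summable)
  have : |(k : ℝ) - lam| ≤ 1 + ((k : ℝ) - lam) ^ 2 := by
    nlinarith [sq_abs ((k : ℝ) - lam), sq_nonneg (|(k : ℝ) - lam| - 1)]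
  nlinarith [poissonPMF_nonneg h k]

noncomputable def poissonMAD (lam : ℝ) : ℝ :=
  ∑' k, poissonPMF lam k * |(k : ℝ) - lam|

lemma sqrt_le_poissonMAD (h : 1 ≤ lam) : 3 / 16 * √lam ≤ poissonMAD lam := by
  have h0 : 0 ≤ lam := zero_le_one.trans h
  set t := 4 * √lam
  have ht : 0 < t := by positivity
  have hsplit : lam ≤ t * poissonMAD lam + (3 * lam ^ 2 + lam) / t ^ 2 :=
    hasSum_le
      (fun k : ℕ => (mul_le_mul_of_nonneg_left
        (sq_le_mul_abs_add_pow_four_div ht ((k : ℝ) - lam)) (poissonPMF_nonneg h0 k)).trans_eq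
          (by ring))
      (hasSum_poissonPMF_mul_sub_sq h0)
      (((summable_poissonPMF_mul_abs_sub h0).hasSum.mul_left t).add
        ((hasSum_poissonPMF_mul_sub_pow_four h0).div_const (t ^ 2)))
  have hsqrt : √lam ^ 2 = lam := Real.sq_sqrt h0
  have htail : (3 * lam ^ 2 + lam) / t ^ 2 ≤ lam / 4 := by
    rw [div_le_iff₀ (by positivity)]
    nlinarith
  nlinarith [Real.sqrt_nonneg lam]

lemma lintegral_poissonMeasure_ofReal (h : 0 ≤ lam) {f : ℕ → ℝ} (hf : ∀ k, 0 ≤ f k)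
    {a : ℝ} (ha : HasSum (fun k => poissonPMF lam k * f k) a) :
    ∫⁻ k, ENNReal.ofReal (f k) ∂poissonMeasure lam.toNNReal = ENNReal.ofReal a := by
  rw [lintegral_countable', ← ha.tsum_eq, ENNReal.ofReal_tsum_of_nonneg
    (fun k => mul_nonneg (poissonPMF_nonneg h k) (hf k)) ha.summable]
  refine tsum_congr fun k => ?_
  rw [poissonMeasure_toNNReal_singleton h, ← ENNReal.ofReal_mul (hf k), mul_comm]

end Poisson

section PoissonSampling

variable {S : ℕ} (n : ℕ) (p : Fin S → ℝ)

noncomputable def poissonSampling : Measure (Fin S → ℕ) :=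
  Measure.pi fun i => poissonMeasure ((n : ℝ) * p i).toNNReal

instance : IsProbabilityMeasure (poissonSampling n p) := by
  unfold poissonSampling; infer_instance

variable {n p}

lemma risk_eq_lintegral (hp : ∀ i, 0 ≤ p i) (L : ℝ) (est : (Fin S → ℕ) → ℝ) :
    risk n p L est = ∫⁻ x, ENNReal.ofReal ((est x - L) ^ 2) ∂poissonSampling n p := by
  have hrate : ∀ i, 0 ≤ (n : ℝ) * p i := fun i => mul_nonneg n.cast_nonneg (hp i)
  rw [lintegral_countable', risk]
  refine tsum_congr fun x => ?_
  rw [poissonSampling, Measure.pi_singleton, prodPMF,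
    ENNReal.ofReal_mul (prod_nonneg fun i _ => poissonPMF_nonneg (hrate i) _), mul_comm,
    ENNReal.ofReal_prod_of_nonneg fun i _ => poissonPMF_nonneg (hrate i) _]
  simp only [poissonMeasure_toNNReal_singleton (hrate _)]

lemma lintegral_poissonSampling_comp_eval (i : Fin S) (g : ℕ → ℝ≥0∞) :
    ∫⁻ x, g (x i) ∂poissonSampling n p =
      ∫⁻ k, g k ∂poissonMeasure ((n : ℝ) * p i).toNNReal :=
  (measurePreserving_eval _ i).lintegral_comp .of_discrete

lemma lintegral_sq_div_sub (hn : 0 < n) {i : Fin S} (hpi : 0 ≤ p i) :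
    ∫⁻ x, ENNReal.ofReal (((x i : ℝ) / n - p i) ^ 2) ∂poissonSampling n p =
      ENNReal.ofReal (p i / n) := by
  have hn' : (n : ℝ) ≠ 0 := by positivity
  have h := (hasSum_poissonPMF_mul_sub_sq (mul_nonneg n.cast_nonneg hpi)).div_const ((n : ℝ) ^ 2)
  rw [show (n : ℝ) * p i / n ^ 2 = p i / n by field_simp] at h
  have hfun : (fun k : ℕ => poissonPMF (n * p i) k * ((k : ℝ) / n - p i) ^ 2) =
      fun k => poissonPMF (n * p i) k * ((k : ℝ) - n * p i) ^ 2 / n ^ 2 :=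
    funext fun k => by field_simp
  rw [lintegral_poissonSampling_comp_eval i fun k => ENNReal.ofReal (((k : ℝ) / n - p i) ^ 2)]
  exact lintegral_poissonMeasure_ofReal (mul_nonneg n.cast_nonneg hpi) (fun k => sq_nonneg _)
    (hfun ▸ h)

lemma lintegral_abs_div_sub (hn : 0 < n) {i : Fin S} (hpi : 0 ≤ p i) :
    ∫⁻ x, ENNReal.ofReal |(x i : ℝ) / n - p i| ∂poissonSampling n p =
      ENNReal.ofReal (poissonMAD (n * p i) / n) := by
  have hn' : (0 : ℝ) < n := by positivity
  have hfun : (fun k : ℕ => poissonPMF (n * p i) k * |(k : ℝ) / n - p i|) =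
      fun k => poissonPMF (n * p i) k * |(k : ℝ) - n * p i| / n := funext fun k => by
    rw [mul_div_assoc, ← abs_of_pos hn', ← abs_div, abs_of_pos hn', sub_div,
      mul_div_cancel_left₀ _ hn'.ne']
  rw [lintegral_poissonSampling_comp_eval i fun k => ENNReal.ofReal |(k : ℝ) / n - p i|]
  refine lintegral_poissonMeasure_ofReal (mul_nonneg n.cast_nonneg hpi) (fun k => abs_nonneg _) ?_
  rw [hfun]
  exact (summable_poissonPMF_mul_abs_sub (mul_nonneg n.cast_nonneg hpi)).hasSum.div_const _

end PoissonSampling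

section Risk

variable {S n : ℕ} {p : Fin S → ℝ}

lemma sq_mleEst_sub_L1dist_le (n : ℕ) (p q : Fin S → ℝ) (x : Fin S → ℕ) :
    (mleEst n q x - L1dist p q) ^ 2 ≤ S * ∑ i, ((x i : ℝ) / n - p i) ^ 2 := by
  have habs : |mleEst n q x - L1dist p q| ≤ ∑ i, |(x i : ℝ) / n - p i| := by
    rw [mleEst, L1dist, ← sum_sub_distrib]
    refine (abs_sum_le_sum_abs _ _).trans (sum_le_sum fun i _ => ?_)
    simpa using abs_abs_sub_abs_le_abs_sub ((x i : ℝ) / n - q i) (p i - q i)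
  calc (mleEst n q x - L1dist p q) ^ 2 ≤ (∑ i, |(x i : ℝ) / n - p i|) ^ 2 := by
        rw [← sq_abs]; gcongr
    _ ≤ #(univ : Finset (Fin S)) * ∑ i, |(x i : ℝ) / n - p i| ^ 2 := sq_sum_le_card_mul_sum_sq
    _ = S * ∑ i, ((x i : ℝ) / n - p i) ^ 2 := by simp [sq_abs]

lemma risk_mleEst_le (hn : 0 < n) (hp : IsDist p) (q : Fin S → ℝ) :
    risk n p (L1dist p q) (mleEst n q) ≤ ENNReal.ofReal (S / n) := by
  calc risk n p (L1dist p q) (mleEst n q)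
      = ∫⁻ x, ENNReal.ofReal ((mleEst n q x - L1dist p q) ^ 2) ∂poissonSampling n p :=
        risk_eq_lintegral hp.1 _ _
    _ ≤ ∫⁻ x, ENNReal.ofReal S * ∑ i, ENNReal.ofReal (((x i : ℝ) / n - p i) ^ 2)
          ∂poissonSampling n p := by
        refine lintegral_mono fun x => ?_
        rw [← ENNReal.ofReal_sum_of_nonneg fun i _ => sq_nonneg _,
          ← ENNReal.ofReal_mul S.cast_nonneg]
        exact ENNReal.ofReal_le_ofReal (sq_mleEst_sub_L1dist_le n p q x)
    _ = ENNReal.ofReal S * ∑ i, ENNReal.ofReal (p i / n) := by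
        rw [lintegral_const_mul _ (.of_discrete), lintegral_finsetSum _ fun i _ => .of_discrete]
        simp only [lintegral_sq_div_sub hn (hp.1 _)]
    _ = ENNReal.ofReal (S / n) := by
        rw [← ENNReal.ofReal_sum_of_nonneg fun i _ => div_nonneg (hp.1 i) n.cast_nonneg,
          ← ENNReal.ofReal_mul S.cast_nonneg, ← sum_div, hp.2, mul_one_div]

lemma isDist_uniform (hS : 0 < S) : IsDist fun _ : Fin S => (S : ℝ)⁻¹ :=
  ⟨fun _ => by positivity, by simp [hS.ne']⟩

lemma lintegral_mleEst_uniform (hn : 0 < n) :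
    ∫⁻ x, ENNReal.ofReal (mleEst n (fun _ : Fin S => (S : ℝ)⁻¹) x)
        ∂poissonSampling n (fun _ : Fin S => (S : ℝ)⁻¹) =
      ENNReal.ofReal (S * (poissonMAD (n / S) / n)) := by
  simp_rw [mleEst, ENNReal.ofReal_sum_of_nonneg fun i _ => abs_nonneg _]
  rw [lintegral_finsetSum _ fun i _ => .of_discrete,
    sum_congr rfl fun i _ => lintegral_abs_div_sub hn (i := i) (by positivity), ← div_eq_mul_inv,
    sum_const, card_univ, Fintype.card_fin, nsmul_eq_mul, ENNReal.ofReal_mul S.cast_nonneg,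
    ENNReal.ofReal_natCast]

lemma le_risk_mleEst_uniform (hS : 0 < S) (hn : 0 < n) (hSn : (S : ℝ) ≤ n) :
    ENNReal.ofReal (9 / 256 * S / n) ≤
      risk n (fun _ : Fin S => (S : ℝ)⁻¹)
        (L1dist (fun _ : Fin S => (S : ℝ)⁻¹) fun _ => (S : ℝ)⁻¹)
        (mleEst n fun _ : Fin S => (S : ℝ)⁻¹) := by
  set u : Fin S → ℝ := fun _ => (S : ℝ)⁻¹
  have hS' : (0 : ℝ) < S := by positivity
  have hMAD := sqrt_le_poissonMAD (show 1 ≤ (n : ℝ) / S by rwa [one_le_div hS'])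
  have hMAD0 : 0 ≤ poissonMAD (n / S) := le_trans (by positivity) hMAD
  have hbound : 9 / 256 * S / n ≤ (S * (poissonMAD (n / S) / n)) ^ 2 :=
    calc 9 / 256 * S / n = (S * (3 / 16 * √(n / S) / n)) ^ 2 := by
          rw [mul_pow, div_pow, mul_pow, Real.sq_sqrt (by positivity)]
          field_simp
          norm_num
      _ ≤ (S * (poissonMAD (n / S) / n)) ^ 2 := by gcongr
  have hL : L1dist u u = 0 := by simp [L1dist]
  calc ENNReal.ofReal (9 / 256 * S / n)
      ≤ ENNReal.ofReal (S * (poissonMAD (n / S) / n)) ^ 2 := by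
        rw [← ENNReal.ofReal_pow (by positivity)]
        exact ENNReal.ofReal_le_ofReal hbound
    _ ≤ ∫⁻ x, ENNReal.ofReal (mleEst n u x) ^ 2 ∂poissonSampling n u :=
        lintegral_mleEst_uniform hn ▸ sq_lintegral_le_lintegral_sq .of_discrete
    _ = risk n u (L1dist u u) (mleEst n u) := by
        rw [risk_eq_lintegral (fun _ => by positivity), hL]
        refine lintegral_congr fun x => ?_
        rw [sub_zero]
        exact (ENNReal.ofReal_pow (sum_nonneg fun i _ => abs_nonneg _) 2).symm

end Risk

/-- for `n ≳ S`, the worst-case risk of the MLE is of order `S/n`. -/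
theorem mle_risk_order : ∃ c C c₀ : ℝ, 0 < c ∧ c ≤ C ∧ 1 ≤ c₀ ∧
    ∀ S n : ℕ, 0 < S → 0 < n → c₀ * S ≤ n →
      ENNReal.ofReal (c * S / n) ≤
        (⨆ pq : {p : Fin S → ℝ // IsDist p} × {q : Fin S → ℝ // IsDist q},
          risk n pq.1.1 (L1dist pq.1.1 pq.2.1) (mleEst n pq.2.1)) ∧
      (⨆ pq : {p : Fin S → ℝ // IsDist p} × {q : Fin S → ℝ // IsDist q},
          risk n pq.1.1 (L1dist pq.1.1 pq.2.1) (mleEst n pq.2.1)) ≤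
        ENNReal.ofReal (C * S / n) := by
  refine ⟨9 / 256, 1, 1, by norm_num, by norm_num, le_rfl, fun S n hS hn hSn => ⟨?_, ?_⟩⟩
  · rw [one_mul] at hSn
    exact (le_risk_mleEst_uniform hS hn hSn).trans
      (le_iSup_of_le ⟨⟨_, isDist_uniform hS⟩, ⟨_, isDist_uniform hS⟩⟩ le_rfl)
  · rw [one_mul]
    exact iSup_le fun pq => risk_mleEst_le hn pq.1.2 pq.2.1
end

section
/- There exist universal constants 0 < c ≤ C and c₀ ≥ 1 such that for all positive integers S and n with n ≥ c₀·S, the maximum likelihood estimator L_1(P_n,Q_n) = Σ_{i=1}^S |p̂_i − q̂_i| in the two-sample Poisson sampling model satisfies c·S/n ≤ sup_{P,Q ∈ M_S} E |L_1(P_n,Q_n) − L_1(P,Q)|² ≤ C·S/n. -/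
open scoped BigOperators ENNReal

/-- Joint pmf of the two-sample Poisson model: all of
`X_i ~ Poisson(n p_i)`, `Y_i ~ Poisson(n q_i)` mutually independent. -/
noncomputable def prodPMF2 {S : ℕ} (n : ℕ) (p q : Fin S → ℝ)
    (xy : (Fin S → ℕ) × (Fin S → ℕ)) : ℝ :=
  prodPMF n p xy.1 * prodPMF n q xy.2

/-- The mean squared error `E (est(X,Y) - L)²` in the two-sample Poisson sampling model. -/
noncomputable def risk2 {S : ℕ} (n : ℕ) (p q : Fin S → ℝ) (L : ℝ)
    (est : (Fin S → ℕ) × (Fin S → ℕ) → ℝ) : ℝ≥0∞ :=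
  ∑' xy : (Fin S → ℕ) × (Fin S → ℕ),
    ENNReal.ofReal (prodPMF2 n p q xy * (est xy - L) ^ 2)

/-- The plug-in (MLE) estimator `L₁(P_n, Q_n) = Σ_i |X_i/n - Y_i/n|`. -/
noncomputable def mle2 {S : ℕ} (n : ℕ) (xy : (Fin S → ℕ) × (Fin S → ℕ)) : ℝ :=
  ∑ i, |(xy.1 i : ℝ) / n - (xy.2 i : ℝ) / n|

/-!
Write the two samples as `S` independent pairs `(X_i, Y_i)`, `X_i ~ Poisson(n p_i)`,
`Y_i ~ Poisson(n q_i)`.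

Upper bound: `|L₁(P_n, Q_n) - L₁(P, Q)| ≤ ∑ᵢ (|p̂ᵢ - pᵢ| + |q̂ᵢ - qᵢ|)`, so by Cauchy–Schwarz the
squared error is at most `2S ∑ᵢ ((p̂ᵢ - pᵢ)² + (q̂ᵢ - qᵢ)²)`, whose mean is
`2S ∑ᵢ (pᵢ + qᵢ) / n = 4S / n`.

Lower bound: take `P = Q` uniform, so `L₁(P, Q) = 0`, and put `λ = n / S ≥ 1`. With
`D = X - Y` for independent `X, Y ~ Poisson(λ)`, Jensen gives a risk of at least
`(S E|D| / n)²`. The Stein identity `E[X g(X)] = λ E g(X + 1)` yields `E D² = 2λ` and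
`E D⁴ = 12λ² + 2λ`, and the moment inequality `(E D²)³ ≤ (E|D|)² E D⁴` then gives
`(E|D|)² ≥ 4λ / 7`, hence a risk of at least `4S / (7n)`.
-/

open scoped NNReal

lemma HasSum.congr_of_eq {ι α : Type*} [AddCommMonoid α] [TopologicalSpace α] {f g : ι → α}
    {s t : α} (h : HasSum f s) (hfg : ∀ i, g i = f i) (hst : s = t) : HasSum g t :=
  hst ▸ h.congr_fun hfg

section Poisson

variable {a b : ℝ}

lemma poissonPMF_nonneg_s10 (ha : 0 ≤ a) (k : ℕ) : 0 ≤ poissonPMF a k := by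
  unfold poissonPMF; positivity

lemma hasSum_poissonPMF_s10 (ha : 0 ≤ a) : HasSum (poissonPMF a) 1 :=
  ProbabilityTheory.hasSum_one_poissonMeasure ⟨a, ha⟩

lemma poissonPMF_succ_mul (a : ℝ) (k : ℕ) :
    poissonPMF a (k + 1) * (k + 1) = a * poissonPMF a k := by
  simp only [poissonPMF, Nat.factorial_succ, Nat.cast_mul, Nat.cast_succ, pow_succ]
  field_simp

noncomputable def poissonPairPMF (a b : ℝ) (z : ℕ × ℕ) : ℝ :=
  poissonPMF a z.1 * poissonPMF b z.2

lemma poissonPairPMF_nonneg (ha : 0 ≤ a) (hb : 0 ≤ b) (z : ℕ × ℕ) : 0 ≤ poissonPairPMF a b z :=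
  mul_nonneg (poissonPMF_nonneg_s10 ha _) (poissonPMF_nonneg_s10 hb _)

lemma hasSum_poissonPairPMF (ha : 0 ≤ a) (hb : 0 ≤ b) : HasSum (poissonPairPMF a b) 1 := by
  have h := (hasSum_poissonPMF_s10 ha).mul (hasSum_poissonPMF_s10 hb) <|
    (hasSum_poissonPMF_s10 ha).summable.mul_of_nonneg (hasSum_poissonPMF_s10 hb).summable
      (poissonPMF_nonneg_s10 ha) (poissonPMF_nonneg_s10 hb)
  rwa [one_mul] at h

lemma hasSum_poissonPairPMF_swap_iff {g : ℕ × ℕ → ℝ} {s : ℝ} :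
    HasSum (fun z => poissonPairPMF a b z * g z) s ↔
      HasSum (fun z => poissonPairPMF b a z * g z.swap) s := by
  rw [← (Equiv.prodComm ℕ ℕ).hasSum_iff]
  simp only [Function.comp_def, Equiv.prodComm_apply, poissonPairPMF, Prod.fst_swap,
    Prod.snd_swap, mul_comm (poissonPMF a _)]

-- Stein–Chen identity `E[X g(X, Y)] = a E g(X + 1, Y)` for `X ~ Poisson(a)`.
lemma HasSum.poissonPairPMF_mul_fst {g : ℕ × ℕ → ℝ} {s : ℝ}
    (h : HasSum (fun z => poissonPairPMF a b z * g (z.1 + 1, z.2)) s) :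
    HasSum (fun z => poissonPairPMF a b z * (z.1 * g z)) (a * s) := by
  have hinj : Function.Injective fun z : ℕ × ℕ => (z.1 + 1, z.2) := by
    intro z w hzw; simp only [Prod.mk.injEq, add_left_inj] at hzw; exact Prod.ext hzw.1 hzw.2
  refine (hinj.hasSum_iff ?_).mp <| (h.mul_left a).congr_fun fun z => ?_
  · rintro ⟨_ | j, k⟩ hz
    · simp
    · exact absurd ⟨(j, k), rfl⟩ hz
  · simp only [Function.comp_apply, poissonPairPMF, Nat.cast_succ]
    linear_combination poissonPMF b z.2 * g (z.1 + 1, z.2) * poissonPMF_succ_mul a z.1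

lemma HasSum.poissonPairPMF_mul_snd {g : ℕ × ℕ → ℝ} {s : ℝ}
    (h : HasSum (fun z => poissonPairPMF a b z * g (z.1, z.2 + 1)) s) :
    HasSum (fun z => poissonPairPMF a b z * (z.2 * g z)) (b * s) :=
  hasSum_poissonPairPMF_swap_iff.mpr
    (hasSum_poissonPairPMF_swap_iff.mp h).poissonPairPMF_mul_fst

lemma hasSum_poissonPairPMF_mul_fst_sub_sq (ha : 0 ≤ a) (hb : 0 ≤ b) :
    HasSum (fun z => poissonPairPMF a b z * ((z.1 : ℝ) - a) ^ 2) a := by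
  have m0 := hasSum_poissonPairPMF ha hb
  have m1 : HasSum (fun z => poissonPairPMF a b z * z.1) a := by
    simpa using (m0.congr_fun fun z => mul_one _).poissonPairPMF_mul_fst (g := 1)
  have m2 : HasSum (fun z => poissonPairPMF a b z * (z.1 * z.1)) (a * (a + 1)) :=
    HasSum.poissonPairPMF_mul_fst (g := fun z => (z.1 : ℝ)) <|
      (m1.add m0).congr_fun fun z => by push_cast; ring
  have h := (m2.sub (m1.mul_left (2 * a))).add (m0.mul_left (a ^ 2))
  exact h.congr_of_eq (fun z => by ring) (by ring)

lemma hasSum_poissonPairPMF_mul_snd_sub_sq (ha : 0 ≤ a) (hb : 0 ≤ b) :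
    HasSum (fun z => poissonPairPMF a b z * ((z.2 : ℝ) - b) ^ 2) b :=
  hasSum_poissonPairPMF_swap_iff.mpr (hasSum_poissonPairPMF_mul_fst_sub_sq hb ha)

lemma HasSum.poissonPairPMF_mul_sub {f : ℝ → ℝ} {s t : ℝ}
    (hs : HasSum (fun z => poissonPairPMF a a z * f ((z.1 : ℝ) - z.2 + 1)) s)
    (ht : HasSum (fun z => poissonPairPMF a a z * f ((z.1 : ℝ) - z.2 - 1)) t) :
    HasSum (fun z => poissonPairPMF a a z * (((z.1 : ℝ) - z.2) * f ((z.1 : ℝ) - z.2)))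
      (a * (s - t)) := by
  have hX := HasSum.poissonPairPMF_mul_fst (g := fun z => f ((z.1 : ℝ) - z.2)) <|
    hs.congr_fun fun z => by push_cast; ring_nf
  have hY := HasSum.poissonPairPMF_mul_snd (g := fun z => f ((z.1 : ℝ) - z.2)) <|
    ht.congr_fun fun z => by push_cast; ring_nf
  rw [mul_sub]
  exact (hX.sub hY).congr_fun fun z => by ring

end Poisson

section Skellam

variable {a : ℝ}

lemma hasSum_poissonPairPMF_mul_sub (ha : 0 ≤ a) :
    HasSum (fun z => poissonPairPMF a a z * ((z.1 : ℝ) - z.2)) 0 := by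
  have m0 := hasSum_poissonPairPMF ha ha
  exact (HasSum.poissonPairPMF_mul_sub (f := 1) (m0.congr_fun fun z => mul_one _)
    (m0.congr_fun fun z => mul_one _)).congr_of_eq (fun z => by simp) (by ring)

lemma hasSum_poissonPairPMF_mul_sub_pow_two (ha : 0 ≤ a) :
    HasSum (fun z => poissonPairPMF a a z * ((z.1 : ℝ) - z.2) ^ 2) (2 * a) := by
  have m0 := hasSum_poissonPairPMF ha ha
  have m1 := hasSum_poissonPairPMF_mul_sub ha
  exact (HasSum.poissonPairPMF_mul_sub (f := fun t => t) ((m1.add m0).congr_fun fun z => by ring)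
    ((m1.sub m0).congr_fun fun z => by ring)).congr_of_eq (fun z => by ring) (by ring)

lemma hasSum_poissonPairPMF_mul_sub_pow_three (ha : 0 ≤ a) :
    HasSum (fun z => poissonPairPMF a a z * ((z.1 : ℝ) - z.2) ^ 3) 0 := by
  have m0 := hasSum_poissonPairPMF ha ha
  have m1 := hasSum_poissonPairPMF_mul_sub ha
  have m2 := hasSum_poissonPairPMF_mul_sub_pow_two ha
  exact (HasSum.poissonPairPMF_mul_sub (f := (· ^ 2))
    (((m2.add (m1.mul_left 2)).add m0).congr_fun fun z => by ring)
    (((m2.sub (m1.mul_left 2)).add m0).congr_fun fun z => by ring)).congr_of_eq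
    (fun z => by ring) (by ring)

lemma hasSum_poissonPairPMF_mul_sub_pow_four (ha : 0 ≤ a) :
    HasSum (fun z => poissonPairPMF a a z * ((z.1 : ℝ) - z.2) ^ 4) (12 * a ^ 2 + 2 * a) := by
  have m0 := hasSum_poissonPairPMF ha ha
  have m1 := hasSum_poissonPairPMF_mul_sub ha
  have m2 := hasSum_poissonPairPMF_mul_sub_pow_two ha
  have m3 := hasSum_poissonPairPMF_mul_sub_pow_three ha
  have hs := (((m3.add (m2.mul_left 3)).add (m1.mul_left 3)).add m0).congr_fun
    (g := fun z => poissonPairPMF a a z * ((z.1 : ℝ) - z.2 + 1) ^ 3) fun z => by ring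
  have ht := (((m3.sub (m2.mul_left 3)).add (m1.mul_left 3)).sub m0).congr_fun
    (g := fun z => poissonPairPMF a a z * ((z.1 : ℝ) - z.2 - 1) ^ 3) fun z => by ring
  exact (hs.poissonPairPMF_mul_sub (f := (· ^ 3)) ht).congr_of_eq (fun z => by ring) (by ring)

end Skellam

namespace ENNReal

variable {ι κ : Type*}

lemma tsum_ofReal_mul_ofReal {w f : ι → ℝ} {s : ℝ} (hw : ∀ i, 0 ≤ w i) (hf : ∀ i, 0 ≤ f i)
    (h : HasSum (fun i => w i * f i) s) :
    ∑' i, ENNReal.ofReal (w i) * ENNReal.ofReal (f i) = ENNReal.ofReal s := by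
  simp_rw [← ENNReal.ofReal_mul (hw _)]
  rw [← ENNReal.ofReal_tsum_of_nonneg (fun i => mul_nonneg (hw i) (hf i)) h.summable, h.tsum_eq]

lemma two_mul_le_add_sq (x y : ℝ≥0∞) : 2 * x * y ≤ x ^ 2 + y ^ 2 := by
  rcases eq_or_ne x ⊤ with rfl | hx
  · simp
  rcases eq_or_ne y ⊤ with rfl | hy
  · simp
  lift x to ℝ≥0 using hx
  lift y to ℝ≥0 using hy
  exact_mod_cast _root_.two_mul_le_add_sq x y

lemma tsum_mul_tsum (f : ι → ℝ≥0∞) (g : κ → ℝ≥0∞) :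
    (∑' i, f i) * ∑' j, g j = ∑' i, ∑' j, f i * g j := by
  rw [← ENNReal.tsum_mul_right]
  exact tsum_congr fun i => ENNReal.tsum_mul_left.symm

lemma sq_tsum_mul_mul_le (w f g : ι → ℝ≥0∞) :
    (∑' i, w i * (f i * g i)) ^ 2 ≤ (∑' i, w i * f i ^ 2) * ∑' i, w i * g i ^ 2 := by
  have key : ∀ i j, 2 * ((w i * (f i * g i)) * (w j * (f j * g j))) ≤
      (w i * f i ^ 2) * (w j * g j ^ 2) + (w j * f j ^ 2) * (w i * g i ^ 2) := fun i j =>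
    calc 2 * ((w i * (f i * g i)) * (w j * (f j * g j)))
        = (w i * w j) * (2 * (f i * g j) * (f j * g i)) := by ring
      _ ≤ (w i * w j) * ((f i * g j) ^ 2 + (f j * g i) ^ 2) := by
        gcongr; exact two_mul_le_add_sq _ _
      _ = _ := by ring
  refine (ENNReal.mul_le_mul_iff_right (a := 2) (by norm_num) (by norm_num)).mp ?_
  calc 2 * (∑' i, w i * (f i * g i)) ^ 2
      = ∑' i, ∑' j, 2 * ((w i * (f i * g i)) * (w j * (f j * g j))) := by
        rw [sq, tsum_mul_tsum, ← ENNReal.tsum_mul_left]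
        simp_rw [← ENNReal.tsum_mul_left]
    _ ≤ ∑' i, ∑' j, ((w i * f i ^ 2) * (w j * g j ^ 2) + (w j * f j ^ 2) * (w i * g i ^ 2)) :=
        ENNReal.tsum_le_tsum fun i => ENNReal.tsum_le_tsum fun j => key i j
    _ = 2 * ((∑' i, w i * f i ^ 2) * ∑' i, w i * g i ^ 2) := by
        simp_rw [ENNReal.tsum_add, ← tsum_mul_tsum]
        rw [ENNReal.tsum_comm, ← tsum_mul_tsum]
        ring

lemma sq_tsum_mul_le_tsum_mul_sq {w : ι → ℝ≥0∞} (hw : ∑' i, w i = 1) (f : ι → ℝ≥0∞) :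
    (∑' i, w i * f i) ^ 2 ≤ ∑' i, w i * f i ^ 2 := by
  simpa [hw] using sq_tsum_mul_mul_le w f (fun _ => 1)

lemma tsum_mul_sq_pow_three_le (w f : ι → ℝ≥0∞) (h : ∑' i, w i * f i ^ 2 ≠ ⊤) :
    (∑' i, w i * f i ^ 2) ^ 3 ≤ (∑' i, w i * f i) ^ 2 * ∑' i, w i * f i ^ 4 := by
  set A₁ := ∑' i, w i * f i
  set A₂ := ∑' i, w i * f i ^ 2
  set A₃ := ∑' i, w i * f i ^ 3
  set A₄ := ∑' i, w i * f i ^ 4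
  have h₁ : A₂ ^ 2 ≤ A₁ * A₃ := by
    convert sq_tsum_mul_mul_le (fun i => w i * f i) (fun _ => 1) f using 3 <;>
      exact funext fun i => by ring
  have h₂ : A₃ ^ 2 ≤ A₂ * A₄ := by
    convert sq_tsum_mul_mul_le w f (f · ^ 2) using 3 <;> exact funext fun i => by ring
  rcases eq_or_ne A₂ 0 with h0 | h0
  · simp [h0]
  refine (ENNReal.mul_le_mul_iff_left h0 h).mp ?_
  calc A₂ ^ 3 * A₂ = (A₂ ^ 2) ^ 2 := by ring
    _ ≤ (A₁ * A₃) ^ 2 := by gcongr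
    _ = A₁ ^ 2 * A₃ ^ 2 := by ring
    _ ≤ A₁ ^ 2 * (A₂ * A₄) := by gcongr
    _ = A₁ ^ 2 * A₄ * A₂ := by ring

variable {S : ℕ}

lemma tsum_pi_fin_prod (f : Fin S → κ → ℝ≥0∞) :
    ∑' x : Fin S → κ, ∏ i, f i (x i) = ∏ i, ∑' k, f i k := by
  induction S with
  | zero => simp
  | succ S ih =>
    rw [← (Fin.consEquiv fun _ => κ).tsum_eq, Fin.prod_univ_succ, ← ih, ENNReal.tsum_mul_tsum]
    simp [Fin.consEquiv, Fin.prod_univ_succ, ENNReal.tsum_prod']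

lemma tsum_pi_fin_prod_eq_one {f : Fin S → κ → ℝ≥0∞} (hf : ∀ i, ∑' k, f i k = 1) :
    ∑' x : Fin S → κ, ∏ i, f i (x i) = 1 := by
  simp [tsum_pi_fin_prod, hf]

lemma tsum_pi_fin_prod_mul_apply {f : Fin S → κ → ℝ≥0∞} (hf : ∀ i, ∑' k, f i k = 1) (j : Fin S)
    (g : κ → ℝ≥0∞) :
    ∑' x : Fin S → κ, (∏ i, f i (x i)) * g (x j) = ∑' k, f j k * g k := by
  classical
  have h := tsum_pi_fin_prod fun i k => f i k * if i = j then g k else 1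
  simp only [Finset.prod_mul_distrib, Finset.prod_ite_eq', Finset.mem_univ, if_true] at h
  rw [h, ← Finset.prod_erase_mul _ _ (Finset.mem_univ j),
    Finset.prod_eq_one fun i hi => by simp [Finset.ne_of_mem_erase hi, hf i]]
  simp

lemma tsum_pi_fin_prod_mul_sum {f : Fin S → κ → ℝ≥0∞} (hf : ∀ i, ∑' k, f i k = 1)
    (g : Fin S → κ → ℝ≥0∞) :
    ∑' x : Fin S → κ, (∏ i, f i (x i)) * ∑ i, g i (x i) = ∑ i, ∑' k, f i k * g i k := by
  simp_rw [Finset.mul_sum]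
  rw [Summable.tsum_finsetSum fun _ _ => ENNReal.summable]
  exact Finset.sum_congr rfl fun i _ => tsum_pi_fin_prod_mul_apply hf i (g i)

end ENNReal

lemma tsum_ofReal_poissonPairPMF {a b : ℝ} (ha : 0 ≤ a) (hb : 0 ≤ b) :
    ∑' z, ENNReal.ofReal (poissonPairPMF a b z) = 1 := by
  rw [← ENNReal.ofReal_tsum_of_nonneg (poissonPairPMF_nonneg ha hb)
    (hasSum_poissonPairPMF ha hb).summable, (hasSum_poissonPairPMF ha hb).tsum_eq,
    ENNReal.ofReal_one]

lemma le_sq_tsum_ofReal_poissonPairPMF_mul_abs_sub {a : ℝ} (ha : 1 ≤ a) :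
    ENNReal.ofReal (4 / 7 * a) ≤
      (∑' z, ENNReal.ofReal (poissonPairPMF a a z) * ENNReal.ofReal |(z.1 : ℝ) - z.2|) ^ 2 := by
  have ha0 : 0 ≤ a := zero_le_one.trans ha
  have hw := poissonPairPMF_nonneg ha0 ha0
  have hm2 : ∑' z, ENNReal.ofReal (poissonPairPMF a a z) * ENNReal.ofReal |(z.1 : ℝ) - z.2| ^ 2 =
      ENNReal.ofReal (2 * a) := by
    simp_rw [← ENNReal.ofReal_pow (abs_nonneg _), sq_abs]
    exact ENNReal.tsum_ofReal_mul_ofReal hw (fun _ => by positivity)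
      (hasSum_poissonPairPMF_mul_sub_pow_two ha0)
  have hm4 : ∑' z, ENNReal.ofReal (poissonPairPMF a a z) * ENNReal.ofReal |(z.1 : ℝ) - z.2| ^ 4 =
      ENNReal.ofReal (12 * a ^ 2 + 2 * a) := by
    simp_rw [← ENNReal.ofReal_pow (abs_nonneg _), (by decide : Even 4).pow_abs]
    exact ENNReal.tsum_ofReal_mul_ofReal hw (fun _ => by positivity)
      (hasSum_poissonPairPMF_mul_sub_pow_four ha0)
  have h := ENNReal.tsum_mul_sq_pow_three_le (fun z => ENNReal.ofReal (poissonPairPMF a a z))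
    (fun z => ENNReal.ofReal |(z.1 : ℝ) - z.2|) (by rw [hm2]; exact ENNReal.ofReal_ne_top)
  rw [hm2, hm4] at h
  have hpos : 0 < 12 * a ^ 2 + 2 * a := by positivity
  refine (ENNReal.mul_le_mul_iff_left (ENNReal.ofReal_pos.mpr hpos).ne'
    ENNReal.ofReal_ne_top).mp (le_trans ?_ h)
  rw [← ENNReal.ofReal_mul (by positivity), ← ENNReal.ofReal_pow (by positivity)]
  exact ENNReal.ofReal_le_ofReal (by nlinarith)

lemma risk2_mle2_eq {S n : ℕ} {p q : Fin S → ℝ} (hp : ∀ i, 0 ≤ p i) (hq : ∀ i, 0 ≤ q i)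
    (L : ℝ) :
    risk2 n p q L (mle2 n) = ∑' z : Fin S → ℕ × ℕ,
      (∏ i, ENNReal.ofReal (poissonPairPMF (n * p i) (n * q i) (z i))) *
        ENNReal.ofReal ((∑ i, |((z i).1 : ℝ) / n - (z i).2 / n| - L) ^ 2) := by
  rw [risk2, ← (Equiv.arrowProdEquivProdArrow (Fin S) (fun _ => ℕ) (fun _ => ℕ)).tsum_eq]
  refine tsum_congr fun z => ?_
  have hw : ∀ i, 0 ≤ poissonPairPMF (n * p i) (n * q i) (z i) := fun i =>
    poissonPairPMF_nonneg (by have := hp i; positivity) (by have := hq i; positivity) _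
  rw [← ENNReal.ofReal_prod_of_nonneg fun i _ => hw i,
    ← ENNReal.ofReal_mul (Finset.prod_nonneg fun i _ => hw i)]
  simp only [prodPMF2, prodPMF, mle2, poissonPairPMF, Finset.prod_mul_distrib]
  rfl

lemma sq_sum_abs_sub_sub_L1dist_le {S : ℕ} (x y p q : Fin S → ℝ) :
    (∑ i, |x i - y i| - L1dist p q) ^ 2 ≤ 2 * S * ∑ i, ((x i - p i) ^ 2 + (y i - q i) ^ 2) := by
  have h : |∑ i, |x i - y i| - L1dist p q| ≤ ∑ i, (|x i - p i| + |y i - q i|) := by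
    rw [L1dist, ← Finset.sum_sub_distrib]
    refine (Finset.abs_sum_le_sum_abs _ _).trans (Finset.sum_le_sum fun i _ => ?_)
    refine (abs_abs_sub_abs_le_abs_sub _ _).trans ?_
    rw [show x i - y i - (p i - q i) = (x i - p i) - (y i - q i) by ring]
    exact abs_sub _ _
  calc (∑ i, |x i - y i| - L1dist p q) ^ 2
      ≤ (∑ i, (|x i - p i| + |y i - q i|)) ^ 2 := sq_le_sq' (abs_le.mp h).1 (abs_le.mp h).2
    _ ≤ S * ∑ i, (|x i - p i| + |y i - q i|) ^ 2 := by
      simpa using sq_sum_le_card_mul_sum_sq (s := (Finset.univ : Finset (Fin S)))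
    _ ≤ S * ∑ i, 2 * ((x i - p i) ^ 2 + (y i - q i) ^ 2) := by
      gcongr with i
      nlinarith [sq_abs (x i - p i), sq_abs (y i - q i), sq_nonneg (|x i - p i| - |y i - q i|)]
    _ = 2 * S * ∑ i, ((x i - p i) ^ 2 + (y i - q i) ^ 2) := by
      rw [← Finset.mul_sum]; ring

lemma risk2_mle2_le {S n : ℕ} (hn : 0 < n) {p q : Fin S → ℝ} (hp : IsDist p) (hq : IsDist q) :
    risk2 n p q (L1dist p q) (mle2 n) ≤ ENNReal.ofReal (4 * S / n) := by
  have hn' : (0 : ℝ) < n := Nat.cast_pos.mpr hn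
  have hnp : ∀ i, 0 ≤ (n : ℝ) * p i := fun i => mul_nonneg hn'.le (hp.1 i)
  have hnq : ∀ i, 0 ≤ (n : ℝ) * q i := fun i => mul_nonneg hn'.le (hq.1 i)
  set t : Fin S → ℕ × ℕ → ℝ := fun i k => ((k.1 : ℝ) - n * p i) ^ 2 + ((k.2 : ℝ) - n * q i) ^ 2
  have hpoint : ∀ z : Fin S → ℕ × ℕ, (∑ i, |((z i).1 : ℝ) / n - (z i).2 / n| - L1dist p q) ^ 2 ≤
      2 * S / n ^ 2 * ∑ i, t i (z i) := fun z => by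
    refine (sq_sum_abs_sub_sub_L1dist_le _ _ p q).trans_eq ?_
    simp only [t, Finset.mul_sum]
    exact Finset.sum_congr rfl fun i _ => by field_simp
  have hmoment : ∀ i, ∑' k, ENNReal.ofReal (poissonPairPMF (n * p i) (n * q i) k) *
      ENNReal.ofReal (t i k) = ENNReal.ofReal (n * p i + n * q i) := fun i =>
    ENNReal.tsum_ofReal_mul_ofReal (poissonPairPMF_nonneg (hnp i) (hnq i)) (fun _ => by positivity)
      ((hasSum_poissonPairPMF_mul_fst_sub_sq (hnp i) (hnq i)).add
        (hasSum_poissonPairPMF_mul_snd_sub_sq (hnp i) (hnq i)) |>.congr_fun fun k => by ring)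
  have hmass : ∀ i, ∑' k, ENNReal.ofReal (poissonPairPMF (n * p i) (n * q i) k) = 1 := fun i =>
    tsum_ofReal_poissonPairPMF (hnp i) (hnq i)
  rw [risk2_mle2_eq hp.1 hq.1]
  calc _ ≤ ∑' z : Fin S → ℕ × ℕ, ENNReal.ofReal (2 * S / n ^ 2) *
        ((∏ i, ENNReal.ofReal (poissonPairPMF (n * p i) (n * q i) (z i))) *
          ∑ i, ENNReal.ofReal (t i (z i))) := by
        refine ENNReal.tsum_le_tsum fun z => ?_
        rw [mul_left_comm, ← ENNReal.ofReal_sum_of_nonneg fun i _ => by positivity,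
          ← ENNReal.ofReal_mul (by positivity)]
        gcongr
        exact hpoint z
    _ = ENNReal.ofReal (2 * S / n ^ 2) * ∑ i, ENNReal.ofReal (n * p i + n * q i) := by
        rw [ENNReal.tsum_mul_left,
          ENNReal.tsum_pi_fin_prod_mul_sum hmass fun i k => ENNReal.ofReal (t i k)]
        simp_rw [hmoment]
    _ = ENNReal.ofReal (4 * S / n) := by
        rw [← ENNReal.ofReal_sum_of_nonneg fun i _ => add_nonneg (hnp i) (hnq i),
          ← ENNReal.ofReal_mul (by positivity), Finset.sum_add_distrib, ← Finset.mul_sum,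
          ← Finset.mul_sum, hp.2, hq.2]
        congr 1
        field_simp
        ring

noncomputable def uniformDist (S : ℕ) : Fin S → ℝ := fun _ => (S : ℝ)⁻¹

lemma isDist_uniformDist {S : ℕ} (hS : 0 < S) : IsDist (uniformDist S) :=
  ⟨fun _ => by simp [uniformDist], by simp [uniformDist, hS.ne']⟩

lemma le_risk2_mle2_uniformDist {S n : ℕ} (hS : 0 < S) (hSn : (S : ℝ) ≤ n) :
    ENNReal.ofReal (4 / 7 * S / n) ≤
      risk2 n (uniformDist S) (uniformDist S) (L1dist (uniformDist S) (uniformDist S))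
        (mle2 n) := by
  have hS' : (0 : ℝ) < S := Nat.cast_pos.mpr hS
  have hn' : (0 : ℝ) < n := hS'.trans_le hSn
  obtain ⟨a, hna⟩ : ∃ a : ℝ, (n : ℝ) = S * a := ⟨n / S, by field_simp⟩
  have ha : 1 ≤ a := le_of_mul_le_mul_left (by linarith) hS'
  have hnu : ∀ i, (n : ℝ) * uniformDist S i = a := fun i => by
    simp only [uniformDist, hna]; field_simp
  set A₁ := ∑' k, ENNReal.ofReal (poissonPairPMF a a k) * ENNReal.ofReal |(k.1 : ℝ) - k.2|
  have hmass : ∀ _ : Fin S, ∑' k, ENNReal.ofReal (poissonPairPMF a a k) = 1 := fun _ =>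
    tsum_ofReal_poissonPairPMF (zero_le_one.trans ha) (zero_le_one.trans ha)
  have hL : L1dist (uniformDist S) (uniformDist S) = 0 := by simp [L1dist]
  have hterm : ∀ k : ℕ × ℕ, ENNReal.ofReal |(k.1 : ℝ) / n - k.2 / n| =
      ENNReal.ofReal |(k.1 : ℝ) - k.2| * ENNReal.ofReal (n : ℝ)⁻¹ := fun k => by
    rw [← ENNReal.ofReal_mul (abs_nonneg _), ← sub_div, abs_div, abs_of_pos hn', div_eq_mul_inv]
  rw [hL, risk2_mle2_eq (isDist_uniformDist hS).1 (isDist_uniformDist hS).1]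
  simp only [hnu]
  calc ENNReal.ofReal (4 / 7 * S / n)
      = ENNReal.ofReal (S ^ 2 * (n : ℝ)⁻¹ ^ 2) * ENNReal.ofReal (4 / 7 * a) := by
        rw [← ENNReal.ofReal_mul (by positivity), hna]
        congr 1
        field_simp
    _ ≤ ENNReal.ofReal (S ^ 2 * (n : ℝ)⁻¹ ^ 2) * A₁ ^ 2 := by
        gcongr
        exact le_sq_tsum_ofReal_poissonPairPMF_mul_abs_sub ha
    _ = (∑ _ : Fin S, A₁ * ENNReal.ofReal (n : ℝ)⁻¹) ^ 2 := by
        rw [Finset.sum_const, Finset.card_univ, Fintype.card_fin, nsmul_eq_mul,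
          ENNReal.ofReal_mul (by positivity), ENNReal.ofReal_pow (by positivity),
          ENNReal.ofReal_pow (by positivity), ENNReal.ofReal_natCast]
        ring
    _ = (∑' z : Fin S → ℕ × ℕ, (∏ i, ENNReal.ofReal (poissonPairPMF a a (z i))) *
          ∑ i, ENNReal.ofReal |((z i).1 : ℝ) / n - (z i).2 / n|) ^ 2 := by
        rw [ENNReal.tsum_pi_fin_prod_mul_sum hmass
          fun _ k => ENNReal.ofReal |(k.1 : ℝ) / n - k.2 / n|]
        simp_rw [hterm, ← mul_assoc, ENNReal.tsum_mul_right]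
        rfl
    _ ≤ ∑' z : Fin S → ℕ × ℕ, (∏ i, ENNReal.ofReal (poissonPairPMF a a (z i))) *
          (∑ i, ENNReal.ofReal |((z i).1 : ℝ) / n - (z i).2 / n|) ^ 2 :=
        ENNReal.sq_tsum_mul_le_tsum_mul_sq (ENNReal.tsum_pi_fin_prod_eq_one hmass) _
    _ = _ := by
        refine tsum_congr fun z => ?_
        rw [sub_zero, ← ENNReal.ofReal_sum_of_nonneg fun i _ => abs_nonneg _,
          ← ENNReal.ofReal_pow (Finset.sum_nonneg fun i _ => abs_nonneg _)]

/-- for `n ≳ S`, the worst-case risk of the two-sample MLE is of order `S/n`. -/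
theorem mle2_risk_order : ∃ c C c₀ : ℝ, 0 < c ∧ c ≤ C ∧ 1 ≤ c₀ ∧
    ∀ S n : ℕ, 0 < S → 0 < n → c₀ * S ≤ n →
      ENNReal.ofReal (c * S / n) ≤
        (⨆ pq : {p : Fin S → ℝ // IsDist p} × {q : Fin S → ℝ // IsDist q},
          risk2 n pq.1.1 pq.2.1 (L1dist pq.1.1 pq.2.1) (mle2 n)) ∧
      (⨆ pq : {p : Fin S → ℝ // IsDist p} × {q : Fin S → ℝ // IsDist q},
          risk2 n pq.1.1 pq.2.1 (L1dist pq.1.1 pq.2.1) (mle2 n)) ≤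
        ENNReal.ofReal (C * S / n) := by
  refine ⟨4 / 7, 4, 1, by norm_num, by norm_num, le_rfl, fun S n hS hn hSn => ⟨?_, ?_⟩⟩
  · exact le_iSup_of_le (⟨_, isDist_uniformDist hS⟩, ⟨_, isDist_uniformDist hS⟩)
      (le_risk2_mle2_uniformDist hS (by simpa using hSn))
  · exact iSup_le fun pq => risk2_mle2_le hn pq.1.2 pq.2.2
end
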